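/- arXiv:2412.10512 — 7 statements merged into one kernel-verified Lean document; each statement's English description precedes it below -/
import Mathlib

section
/- Let k ≥ 2, n ≥ 1, and ε₀ > 0. Define ε₀-randomized response RR over [k] as the kernel mapping input x ∈ [k] to the distribution assigning probability e^{ε₀}/(k−1+e^{ε₀}) to x and probability 1/(k−1+e^{ε₀}) to each y ≠ x. If X, X' : Fin n → Fin k differ in at most one coordinate, then for every outcome y ∈ [k], ∑_i RR(X_i)(y) ≤ (1 + e^{ε₀}/n) · ∑_i RR(X'_i)(y). In particular, the mechanism that picks i ∈ [n] uniformly at random and outputs RR(X_i) has pointwise likelihood ratio at most 1 + e^{ε₀}/n on neighboring datasets. -/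
open Finset

/-- `ε₀`-randomized response over `[k]`: input `x` is mapped to the distribution
assigning probability `e^{ε₀}/(k-1+e^{ε₀})` to `x` and `1/(k-1+e^{ε₀})` to each
`y ≠ x`. -/
noncomputable def RR (k : ℕ) (ε₀ : ℝ) (x y : Fin k) : ℝ :=
  if y = x then Real.exp ε₀ / ((k : ℝ) - 1 + Real.exp ε₀)
  else 1 / ((k : ℝ) - 1 + Real.exp ε₀)

/-- On datasets differing in at most one coordinate, the sums of
randomized-response probabilities at any outcome `y` satisfy
`∑ᵢ RR(Xᵢ)(y) ≤ (1 + e^{ε₀}/n) ∑ᵢ RR(X'ᵢ)(y)`; in particular the subsampled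
randomized response mechanism has pointwise likelihood ratio at most
`1 + e^{ε₀}/n`. -/
theorem subsampled_RR_likelihood_ratio
    (k n : ℕ) (hk : 2 ≤ k) (hn : 1 ≤ n) (ε₀ : ℝ) (hε₀ : 0 < ε₀)
    (X X' : Fin n → Fin k) (j : Fin n)
    (hneighbor : ∀ i, i ≠ j → X i = X' i)
    (y : Fin k) :
    (∑ i, RR k ε₀ (X i) y)
      ≤ (1 + Real.exp ε₀ / (n : ℝ)) * ∑ i, RR k ε₀ (X' i) y
    ∧ (1 / (n : ℝ)) * ∑ i, RR k ε₀ (X i) y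
      ≤ (1 + Real.exp ε₀ / (n : ℝ)) * ((1 / (n : ℝ)) * ∑ i, RR k ε₀ (X' i) y) := by
  have hD : (0:ℝ) < (k : ℝ) - 1 + Real.exp ε₀ := by
    have : (2:ℝ) ≤ (k:ℝ) := by exact_mod_cast hk
    have := Real.exp_pos ε₀
    linarith
  set D := (k : ℝ) - 1 + Real.exp ε₀ with hDdef
  have hexp1 : (1:ℝ) ≤ Real.exp ε₀ := (Real.one_le_exp_iff).mpr hε₀.le
  have hlb : ∀ x : Fin k, 1 / D ≤ RR k ε₀ x y := by
    intro x
    unfold RR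
    split
    · gcongr
    · exact le_refl _
  have hub : ∀ x : Fin k, RR k ε₀ x y ≤ Real.exp ε₀ / D := by
    intro x
    unfold RR
    split
    · exact le_refl _
    · gcongr
  have hnpos : (0:ℝ) < (n:ℝ) := by exact_mod_cast hn
  have heq : ∑ i ∈ univ.erase j, RR k ε₀ (X i) y
      = ∑ i ∈ univ.erase j, RR k ε₀ (X' i) y := by
    refine Finset.sum_congr rfl fun i hi => ?_
    rw [hneighbor i (Finset.mem_erase.mp hi).1]
  have hS : ∑ i, RR k ε₀ (X i) y ≤ (∑ i, RR k ε₀ (X' i) y) + Real.exp ε₀ / D := by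
    rw [← Finset.sum_erase_add univ _ (Finset.mem_univ j),
        ← Finset.sum_erase_add univ (fun i => RR k ε₀ (X' i) y) (Finset.mem_univ j), heq]
    have h1 := hub (X j)
    have h2 : (0:ℝ) ≤ RR k ε₀ (X' j) y := le_trans (by positivity) (hlb (X' j))
    linarith
  have hS' : (n:ℝ) / D ≤ ∑ i, RR k ε₀ (X' i) y := by
    have := Finset.sum_le_sum (fun i (_ : i ∈ (univ : Finset (Fin n))) => hlb (X' i))
    simpa [Finset.card_univ, div_eq_mul_inv, mul_comm] using this
  have hmain : (∑ i, RR k ε₀ (X i) y)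
      ≤ (1 + Real.exp ε₀ / (n : ℝ)) * ∑ i, RR k ε₀ (X' i) y := by
    have hstep : Real.exp ε₀ / D ≤ (Real.exp ε₀ / (n:ℝ)) * ∑ i, RR k ε₀ (X' i) y := by
      have h := mul_le_mul_of_nonneg_left hS' (by positivity : (0:ℝ) ≤ Real.exp ε₀ / (n:ℝ))
      calc Real.exp ε₀ / D = (Real.exp ε₀ / (n:ℝ)) * ((n:ℝ) / D) := by
            field_simp
        _ ≤ _ := h
    nlinarith [hS]
  refine ⟨hmain, ?_⟩
  have h2 := mul_le_mul_of_nonneg_left hmain (by positivity : (0:ℝ) ≤ 1/(n:ℝ))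
  calc (1/(n:ℝ)) * ∑ i, RR k ε₀ (X i) y ≤ (1/(n:ℝ)) * ((1 + Real.exp ε₀ / (n : ℝ)) * ∑ i, RR k ε₀ (X' i) y) := h2
    _ = (1 + Real.exp ε₀ / (n : ℝ)) * ((1 / (n : ℝ)) * ∑ i, RR k ε₀ (X' i) y) := by ring
end

section
/- Let k ≥ 2, n ≥ 1, and ε > 0 with ε·n > 1, and set ε₀ := ln(ε·n). Then for any two datasets X, X' ∈ [k]^n differing in at most one coordinate and every outcome y ∈ [k], the output probabilities of the subsampled randomized response mechanism satisfy ((1/n)·∑_i RR(X_i)(y)) ≤ e^{ε} · ((1/n)·∑_i RR(X'_i)(y)), i.e., the mechanism satisfies ε-differential privacy; indeed the likelihood ratio is at most 1 + e^{ε₀}/n = 1 + ε ≤ e^{ε}. -/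
open Finset

/-!
Every value of `RR k ε₀ · y` lies in `[a, e^{ε₀} a]` with `a = 1/(k - 1 + e^{ε₀})`. Changing one of
the `n` records changes the sum `∑ᵢ RR(Xᵢ)(y)` by at most `(e^{ε₀} - 1) a`, while the sum itself is
at least `n a`; so the likelihood ratio is at most `1 + (e^{ε₀} - 1)/n ≤ 1 + e^{ε₀}/n = 1 + ε ≤ e^ε`.
-/

theorem sum_sub_sum_eq_of_eq_off {ι M : Type*} [Fintype ι] [AddCommGroup M] {f g : ι → M} {j : ι}
    (h : ∀ i, i ≠ j → f i = g i) : ∑ i, f i - ∑ i, g i = f j - g j := by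
  rw [← Finset.sum_sub_distrib]
  exact Fintype.sum_eq_single j fun i hi => sub_eq_zero.mpr (h i hi)

theorem sum_comp_le_one_add_mul_sum_comp {ι α : Type*} [Fintype ι] {q : α → ℝ} {a c : ℝ}
    (ha : 0 < a) (hq : ∀ x, a ≤ q x ∧ q x ≤ c * a) {X X' : ι → α} {j : ι}
    (hneighbor : ∀ i, i ≠ j → X i = X' i) :
    ∑ i, q (X i) ≤ (1 + (c - 1) / Fintype.card ι) * ∑ i, q (X' i) := by
  have hcard : (0 : ℝ) < Fintype.card ι := Nat.cast_pos.mpr (Fintype.card_pos_iff.mpr ⟨j⟩)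
  have hc : 0 ≤ c - 1 := by nlinarith [hq (X j)]
  have hlower : Fintype.card ι * a ≤ ∑ i, q (X' i) := by
    simpa using Finset.card_nsmul_le_sum univ (fun i => q (X' i)) a fun i _ => (hq (X' i)).1
  have hdiff : ∑ i, q (X i) - ∑ i, q (X' i) ≤ (c - 1) * a := by
    rw [sum_sub_sum_eq_of_eq_off fun i hi => congrArg q (hneighbor i hi)]
    linarith [(hq (X j)).2, (hq (X' j)).1]
  calc ∑ i, q (X i) ≤ ∑ i, q (X' i) + (c - 1) / Fintype.card ι * (Fintype.card ι * a) := by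
        have : (c - 1) / Fintype.card ι * (Fintype.card ι * a) = (c - 1) * a := by field_simp
        linarith
    _ ≤ ∑ i, q (X' i) + (c - 1) / Fintype.card ι * ∑ i, q (X' i) := by gcongr
    _ = (1 + (c - 1) / Fintype.card ι) * ∑ i, q (X' i) := by ring

theorem RR_normalizer_pos {k : ℕ} (ε₀ : ℝ) (y : Fin k) : 0 < (k : ℝ) - 1 + Real.exp ε₀ := by
  have hk : (1 : ℝ) ≤ k := by exact_mod_cast y.pos
  linarith [Real.exp_pos ε₀]

theorem RR_bounds {k : ℕ} {ε₀ : ℝ} (hε₀ : 0 ≤ ε₀) (x y : Fin k) :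
    1 / ((k : ℝ) - 1 + Real.exp ε₀) ≤ RR k ε₀ x y ∧
      RR k ε₀ x y ≤ Real.exp ε₀ * (1 / ((k : ℝ) - 1 + Real.exp ε₀)) := by
  have hD := RR_normalizer_pos ε₀ y
  have hexp : 1 ≤ Real.exp ε₀ := Real.one_le_exp hε₀
  unfold RR
  split_ifs
  · exact ⟨by gcongr, (mul_one_div _ _).ge⟩
  · exact ⟨le_rfl, le_mul_of_one_le_left (by positivity) hexp⟩

theorem subsampled_RR_pure_DP_general
    (k n : ℕ) (ε : ℝ)
    (hεn : 1 < ε * (n : ℝ)) (ε₀ : ℝ) (hε₀ : ε₀ = Real.log (ε * (n : ℝ)))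
    (X X' : Fin n → Fin k) (j : Fin n)
    (hneighbor : ∀ i, i ≠ j → X i = X' i)
    (y : Fin k) :
    (1 / (n : ℝ)) * ∑ i, RR k ε₀ (X i) y
      ≤ Real.exp ε * ((1 / (n : ℝ)) * ∑ i, RR k ε₀ (X' i) y)
    ∧ 1 + Real.exp ε₀ / (n : ℝ) = 1 + ε
    ∧ 1 + ε ≤ Real.exp ε := by
  have hn : (0 : ℝ) < n := Nat.cast_pos.mpr j.pos
  have hexp : Real.exp ε₀ = ε * n := by rw [hε₀, Real.exp_log (by linarith)]
  have hε₀_nonneg : 0 ≤ ε₀ := hε₀ ▸ Real.log_nonneg hεn.le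
  have hratio := sum_comp_le_one_add_mul_sum_comp (q := fun x => RR k ε₀ x y)
    (one_div_pos.mpr (RR_normalizer_pos ε₀ y)) (fun x => RR_bounds hε₀_nonneg x y) hneighbor
  rw [Fintype.card_fin] at hratio
  have hexp_div : Real.exp ε₀ / n = ε := by rw [hexp]; field_simp
  have hone_add : 1 + ε ≤ Real.exp ε := by linarith [Real.add_one_le_exp ε]
  have hfactor : 1 + (Real.exp ε₀ - 1) / n ≤ Real.exp ε := by
    rw [sub_div, hexp_div]
    linarith [one_div_pos.mpr hn]
  have hsum_nonneg : 0 ≤ ∑ i, RR k ε₀ (X' i) y := sum_nonneg fun i _ =>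
    (one_div_pos.mpr (RR_normalizer_pos ε₀ y)).le.trans (RR_bounds hε₀_nonneg (X' i) y).1
  refine ⟨?_, by rw [hexp_div], hone_add⟩
  rw [mul_left_comm]
  gcongr
  exact hratio.trans (by gcongr)

/-- With `ε₀ := ln(ε n)` (for `ε n > 1`), the subsampled
randomized response mechanism is `ε`-differentially private: on neighboring
datasets its output probabilities satisfy a pointwise `e^ε` likelihood bound;
indeed the likelihood ratio is at most `1 + e^{ε₀}/n = 1 + ε ≤ e^ε`. -/
theorem subsampled_RR_pure_DP
    (k n : ℕ) (hk : 2 ≤ k) (hn : 1 ≤ n) (ε : ℝ) (hε : 0 < ε)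
    (hεn : 1 < ε * (n : ℝ)) (ε₀ : ℝ) (hε₀ : ε₀ = Real.log (ε * (n : ℝ)))
    (X X' : Fin n → Fin k) (j : Fin n)
    (hneighbor : ∀ i, i ≠ j → X i = X' i)
    (y : Fin k) :
    (1 / (n : ℝ)) * ∑ i, RR k ε₀ (X i) y
      ≤ Real.exp ε * ((1 / (n : ℝ)) * ∑ i, RR k ε₀ (X' i) y)
    ∧ 1 + Real.exp ε₀ / (n : ℝ) = 1 + ε
    ∧ 1 + ε ≤ Real.exp ε :=
  subsampled_RR_pure_DP_general k n ε hεn ε₀ hε₀ X X' j hneighbor y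
end

section
/- Let c := 2/(3·81) = 2/243, let k ≥ 2 be a natural number, let ε ∈ (0,4), let δ ∈ (0, 4e^{−4}), and let n ≥ 1 be such that c·ε²·n/ln(4/δ) ≥ 2. Set ε₀ := ln(c·ε²·n/ln(4/δ) − 1). Then log(1 + 8·(e^{ε₀}+1)·( sqrt( ((k+1)/k) · (log(4/δ)/n) · (1/(e^{ε₀}+k−1)) ) + (k+1)/(k·n) )) ≤ 8·ε·sqrt(3c/2) + 3c·ε² < ε. -/
/-!
With `L = log (4/δ)` and `A = cε²n/L`, the choice of `ε₀` makes `e^{ε₀} + 1 = A`. For `k ≥ 2` we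
have `(k+1)/k ≤ 3/2` and `e^{ε₀} + k - 1 ≥ A`, so the square-root term, multiplied by `A`, is at
most `√(3/2 · A · L/n) = ε √(3c/2)`, while `A (k+1)/(kn) ≤ 3cε²/(2L) ≤ 3cε²/8` because
`δ < 4e^{-4}` forces `L > 4`. Then `log (1 + x) ≤ x` gives the first bound, and for `c = 2/243`
it reads `8ε/9 + 2ε²/81`, which is below `ε` exactly when `ε < 9/2`.
-/

open Real

lemma lt_log_div_of_lt_mul_exp_neg {a t δ : ℝ} (hδ : 0 < δ) (h : δ < a * exp (-t)) :
    t < log (a / δ) := by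
  have ha : 0 < a := pos_of_mul_pos_left (hδ.trans h) (exp_pos _).le
  rw [lt_log_iff_exp_lt (div_pos ha hδ), lt_div_iff₀ hδ]
  calc exp t * δ < exp t * (a * exp (-t)) := by gcongr
    _ = a := by rw [mul_left_comm, ← exp_add, add_neg_cancel, exp_zero, mul_one]

lemma log_one_add_le_self {x : ℝ} (hx : 0 ≤ x) : log (1 + x) ≤ x := by
  linarith [log_le_sub_one_of_pos (by linarith : (0 : ℝ) < 1 + x)]

lemma add_one_div_le_three_halves {k : ℝ} (hk : 2 ≤ k) : (k + 1) / k ≤ 3 / 2 := by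
  rw [div_le_div_iff₀ (by linarith) two_pos]
  linarith

lemma mul_sqrt_randomizedResponse_le {k e x : ℝ} (hk : 2 ≤ k) (he : 0 ≤ e) (hx : 0 ≤ x) :
    (e + 1) * √((k + 1) / k * x * (1 / (e + k - 1))) ≤ √(3 / 2 * (e + 1) * x) := by
  have he1 : 0 < e + 1 := by linarith
  have hd : 0 < e + k - 1 := by linarith
  have hy : 0 ≤ (k + 1) / k * x * (1 / (e + k - 1)) := by
    have : 0 < k := by linarith
    positivity
  rw [le_sqrt (by positivity) (by positivity), mul_pow, sq_sqrt hy]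
  calc (e + 1) ^ 2 * ((k + 1) / k * x * (1 / (e + k - 1)))
      ≤ (e + 1) ^ 2 * (3 / 2 * x * (1 / (e + 1))) := by
        gcongr (e + 1) ^ 2 * (?_ * x * (1 / ?_))
        · exact add_one_div_le_three_halves hk
        · linarith
    _ = 3 / 2 * (e + 1) * x := by field_simp

lemma add_one_div_mul_le {k n : ℝ} (hk : 2 ≤ k) (hn : 0 < n) :
    (k + 1) / (k * n) ≤ 3 / (2 * n) := by
  rw [← div_div, ← div_div]
  gcongr ?_ / n
  exact add_one_div_le_three_halves hk

lemma shuffle_randomizedResponse_le {c ε k n L e : ℝ} (hc : 0 ≤ c) (hε : 0 ≤ ε) (hk : 2 ≤ k)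
    (hn : 0 < n) (hL : 4 ≤ L) (he : 0 ≤ e) (heA : e + 1 = c * ε ^ 2 * n / L) :
    8 * (e + 1) * (√((k + 1) / k * (L / n) * (1 / (e + k - 1))) + (k + 1) / (k * n))
      ≤ 8 * ε * √(3 * c / 2) + 3 * c * ε ^ 2 := by
  have hL0 : 0 < L := by linarith
  have hsqrt : √(3 / 2 * (e + 1) * (L / n)) = ε * √(3 * c / 2) := by
    rw [heA, show 3 / 2 * (c * ε ^ 2 * n / L) * (L / n) = ε ^ 2 * (3 * c / 2) by
      field_simp, sqrt_mul (sq_nonneg _), sqrt_sq hε]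
  have hlin : (e + 1) * (3 / (2 * n)) ≤ 3 * c * ε ^ 2 / 8 := by
    rw [heA, show c * ε ^ 2 * n / L * (3 / (2 * n)) = 3 * c * ε ^ 2 / (2 * L) by
      field_simp]
    gcongr
    linarith
  calc 8 * (e + 1) * (√((k + 1) / k * (L / n) * (1 / (e + k - 1))) + (k + 1) / (k * n))
      = 8 * ((e + 1) * √((k + 1) / k * (L / n) * (1 / (e + k - 1))))
        + 8 * ((e + 1) * ((k + 1) / (k * n))) := by ring
    _ ≤ 8 * √(3 / 2 * (e + 1) * (L / n)) + 8 * ((e + 1) * (3 / (2 * n))) := by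
        gcongr 8 * ?_ + 8 * ((e + 1) * ?_)
        · exact mul_sqrt_randomizedResponse_le hk he (by positivity)
        · exact add_one_div_mul_le hk hn
    _ ≤ 8 * ε * √(3 * c / 2) + 3 * c * ε ^ 2 := by
        rw [hsqrt]
        linarith

lemma eight_mul_add_lt_self {ε : ℝ} (h0 : 0 < ε) (h : ε < 9 / 2) :
    8 * ε * √(3 * (2 / 243) / 2) + 3 * (2 / 243) * ε ^ 2 < ε := by
  rw [show (3 * (2 / 243) / 2 : ℝ) = (1 / 9) ^ 2 by norm_num, sqrt_sq (by norm_num)]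
  nlinarith

theorem shuffling_privacy_bound_general
    (c : ℝ) (hc : c = 2 / 243)
    (k : ℕ) (hk : 2 ≤ k)
    (ε : ℝ) (hε : ε ∈ Set.Ioo (0 : ℝ) 4)
    (δ : ℝ) (hδ : δ ∈ Set.Ioo (0 : ℝ) (4 * Real.exp (-4)))
    (n : ℝ)
    (hbig : 2 ≤ c * ε ^ 2 * n / Real.log (4 / δ))
    (ε₀ : ℝ) (hε₀ : ε₀ = Real.log (c * ε ^ 2 * n / Real.log (4 / δ) - 1)) :
    Real.log (1 + 8 * (Real.exp ε₀ + 1) *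
        (Real.sqrt (((k : ℝ) + 1) / (k : ℝ) * (Real.log (4 / δ) / n) *
            (1 / (Real.exp ε₀ + (k : ℝ) - 1)))
          + ((k : ℝ) + 1) / ((k : ℝ) * n)))
      ≤ 8 * ε * Real.sqrt (3 * c / 2) + 3 * c * ε ^ 2
    ∧ 8 * ε * Real.sqrt (3 * c / 2) + 3 * c * ε ^ 2 < ε := by
  obtain ⟨hε0, hε4⟩ := hε
  have hc0 : 0 < c := by rw [hc]; norm_num
  have hL : 4 < log (4 / δ) := lt_log_div_of_lt_mul_exp_neg hδ.1 hδ.2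
  have hn : 0 < n := by
    by_contra! hn
    have : c * ε ^ 2 * n / log (4 / δ) ≤ 0 :=
      div_nonpos_of_nonpos_of_nonneg (mul_nonpos_of_nonneg_of_nonpos (by positivity) hn)
        (by linarith)
    linarith
  have heA : exp ε₀ + 1 = c * ε ^ 2 * n / log (4 / δ) := by
    rw [hε₀, exp_log (by linarith), sub_add_cancel]
  have hbound := shuffle_randomizedResponse_le hc0.le hε0.le (by exact_mod_cast hk : (2 : ℝ) ≤ k) hn hL.le
    (exp_nonneg ε₀) heA
  refine ⟨(log_one_add_le_self ?_).trans hbound, hc ▸ eight_mul_add_lt_self hε0 (by linarith)⟩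
  have := exp_nonneg ε₀
  positivity

/-- Verification of the Feldman–McMillan–Talwar
amplification-by-shuffling privacy bound for `n` users each running
`ε₀`-randomized response over `[k]`, where `ε₀ = ln(cε²n/ln(4/δ) − 1)` with
`c = 2/243`: the shuffled privacy parameter is at most
`8ε√(3c/2) + 3cε² < ε`. -/
theorem shuffling_privacy_bound
    (c : ℝ) (hc : c = 2 / 243)
    (k : ℕ) (hk : 2 ≤ k)
    (ε : ℝ) (hε : ε ∈ Set.Ioo (0 : ℝ) 4)
    (δ : ℝ) (hδ : δ ∈ Set.Ioo (0 : ℝ) (4 * Real.exp (-4)))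
    (n : ℝ) (hn : 1 ≤ n)
    (hbig : 2 ≤ c * ε ^ 2 * n / Real.log (4 / δ))
    (ε₀ : ℝ) (hε₀ : ε₀ = Real.log (c * ε ^ 2 * n / Real.log (4 / δ) - 1)) :
    Real.log (1 + 8 * (Real.exp ε₀ + 1) *
        (Real.sqrt (((k : ℝ) + 1) / (k : ℝ) * (Real.log (4 / δ) / n) *
            (1 / (Real.exp ε₀ + (k : ℝ) - 1)))
          + ((k : ℝ) + 1) / ((k : ℝ) * n)))
      ≤ 8 * ε * Real.sqrt (3 * c / 2) + 3 * c * ε ^ 2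
    ∧ 8 * ε * Real.sqrt (3 * c / 2) + 3 * c * ε ^ 2 < ε :=
  shuffling_privacy_bound_general c hc k hk ε hε δ hδ n hbig ε₀ hε₀
end

section
/- Let X₁, …, Xₙ be i.i.d. real-valued random variables with common distribution D having CDF F, let γ ∈ (0, 1/2) and β ∈ (0,1). Define the population quantile q_τ := inf{x : F(x) ≥ τ} and the empirical quantile q̂_γ := inf{x : #{i : Xᵢ ≤ x} ≥ γ·n}. If n ≥ (1/(2γ²))·log(1/β), then Pr( q̂_γ > q_{2γ} ) ≤ β. -/
open MeasureTheory ProbabilityTheory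

/-- The CDF of a distribution `D` on `ℝ`. -/
noncomputable def distCdf (D : Measure ℝ) (x : ℝ) : ℝ := (D (Set.Iic x)).toReal

/-- The population `τ`-quantile `q_τ := inf {x : F(x) ≥ τ}`. -/
noncomputable def popQuantile (D : Measure ℝ) (τ : ℝ) : ℝ :=
  sInf {x : ℝ | τ ≤ distCdf D x}

/-- The empirical `γ`-quantile `q̂_γ := inf {x : #{i : Xᵢ ≤ x} ≥ γ·n}`. -/
noncomputable def empQuantile {n : ℕ} (X : Fin n → ℝ) (γ : ℝ) : ℝ :=
  sInf {x : ℝ | γ * (n : ℝ) ≤ ((Finset.univ.filter (fun i => X i ≤ x)).card : ℝ)}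

/-!
Right-continuity of the CDF gives `F(q) ≥ 2γ` at `q = q_{2γ}`, so the number of samples at most
`q` has mean at least `2γn`. The empirical quantile can only exceed `q` if fewer than `γn` samples
lie at or below `q`, a deviation of at least `γn` below the mean, which by Hoeffding's inequality
has probability at most `exp (-2γ²n) ≤ β`.
-/

open Real Finset

lemma distCdf_eq_cdf (D : Measure ℝ) [IsProbabilityMeasure D] : distCdf D = cdf D :=
  funext fun x => by rw [cdf_eq_real, distCdf, measureReal_def]

lemma le_distCdf_popQuantile (D : Measure ℝ) [IsProbabilityMeasure D] {τ : ℝ} (hτ : τ < 1) :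
    τ ≤ distCdf D (popQuantile D τ) := by
  rw [popQuantile, distCdf_eq_cdf]
  rcases le_or_gt τ 0 with hτ0 | hτ0
  · exact hτ0.trans (cdf_nonneg D _)
  set S := {x | τ ≤ cdf D x}
  have hne : S.Nonempty := ((tendsto_cdf_atTop D).eventually (eventually_ge_nhds hτ)).exists
  have hbdd : BddBelow S := by
    obtain ⟨x₀, hx₀⟩ := ((tendsto_cdf_atBot D).eventually (eventually_lt_nhds hτ0)).exists
    exact ⟨x₀, fun y hy => le_of_not_gt fun hyx => (hy.trans (monotone_cdf D hyx.le)).not_gt hx₀⟩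
  have hcont : ContinuousWithinAt (cdf D) S (sInf S) :=
    ((cdf D).right_continuous _).mono fun x hx => csInf_le hbdd hx
  exact ContinuousWithinAt.closure_le (csInf_mem_closure hne hbdd) continuousWithinAt_const hcont
    fun y hy => hy

lemma empQuantile_le_of_le_card {n : ℕ} (X : Fin n → ℝ) {γ x : ℝ} (hγn : 0 < γ * n)
    (hx : γ * n ≤ #{i | X i ≤ x}) : empQuantile X γ ≤ x := by
  obtain ⟨m, hm⟩ := (Set.finite_range X).bddBelow
  refine csInf_le ⟨m, fun y hy => ?_⟩ hx
  obtain ⟨i, hi⟩ := Finset.card_pos.mp (by exact_mod_cast hγn.trans_le hy)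
  exact (hm ⟨i, rfl⟩).trans (Finset.mem_filter.mp hi).2

/-- Hoeffding's inequality for the lower tail of the number of i.i.d. samples falling in `s`. -/
lemma measureReal_le_sub_card_le {Ω : Type*} [MeasurableSpace Ω] {μ : Measure Ω}
    [IsProbabilityMeasure μ] {n : ℕ} {X : Fin n → Ω → ℝ} (hmeas : ∀ i, Measurable (X i))
    (hindep : iIndepFun X μ) {D : Measure ℝ} (hid : ∀ i, μ.map (X i) = D) {s : Set ℝ}
    [DecidablePred (· ∈ s)] (hs : MeasurableSet s) {ε : ℝ} (hε : 0 ≤ ε) :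
    μ.real {ω | ε ≤ n * D.real s - #{i | X i ω ∈ s}} ≤ exp (-2 * ε ^ 2 / n) := by
  set Y : Fin n → Ω → ℝ := fun i => (fun x => D.real s - s.indicator 1 x) ∘ X i with hY
  have hY_indep : iIndepFun Y μ :=
    hindep.comp _ fun _ => measurable_const.sub (measurable_one.indicator hs)
  have hY_subG : ∀ i, HasSubgaussianMGF (Y i) ((‖(1 : ℝ) - 0‖₊ / 2) ^ 2) μ := by
    intro i
    have hind_meas : Measurable fun ω => s.indicator (1 : ℝ → ℝ) (X i ω) :=
      (measurable_one.indicator hs).comp (hmeas i)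
    have hind_mem : ∀ᵐ ω ∂μ, s.indicator (1 : ℝ → ℝ) (X i ω) ∈ Set.Icc 0 1 :=
      ae_of_all _ fun ω => ⟨Set.indicator_nonneg (fun _ _ => zero_le_one) _,
        Set.indicator_le_self' (fun _ _ => zero_le_one) _⟩
    have hmean : μ[fun ω => s.indicator (1 : ℝ → ℝ) (X i ω)] = D.real s := by
      rw [← integral_map (hmeas i).aemeasurable (measurable_one.indicator hs).aestronglyMeasurable,
        hid i, integral_indicator_one hs]
    convert (hasSubgaussianMGF_of_mem_Icc hind_meas.aemeasurable hind_mem).neg using 1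
    ext ω
    simp [hY, hmean]
  have hsum : ∀ ω, ∑ i, Y i ω = n * D.real s - #{i | X i ω ∈ s} := fun ω => by
    simp [hY, Finset.sum_sub_distrib, Set.indicator_apply, Finset.sum_boole]
  have hhoeffding := HasSubgaussianMGF.measure_sum_ge_le_of_iIndepFun hY_indep (s := univ)
    (fun i _ => hY_subG i) hε
  simp_rw [hsum] at hhoeffding
  convert hhoeffding using 2
  simp only [sub_zero, nnnorm_one, sum_const, card_univ, Fintype.card_fin, nsmul_eq_mul]
  push_cast
  ring

/-- For i.i.d. samples from `D`, if `n ≥ (1/(2γ²))·log(1/β)` then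
the empirical `γ`-quantile exceeds the population `2γ`-quantile with
probability at most `β`. -/
theorem empirical_quantile_upper
    {Ω : Type*} [MeasurableSpace Ω] (μ : Measure Ω) [IsProbabilityMeasure μ]
    (n : ℕ) (X : Fin n → Ω → ℝ) (hmeas : ∀ i, Measurable (X i))
    (D : Measure ℝ) [IsProbabilityMeasure D]
    (hindep : iIndepFun X μ)
    (hid : ∀ i, Measure.map (X i) μ = D)
    (γ β : ℝ) (hγ : γ ∈ Set.Ioo (0 : ℝ) (1 / 2)) (hβ : β ∈ Set.Ioo (0 : ℝ) 1)
    (hn : (n : ℝ) ≥ (1 / (2 * γ ^ 2)) * Real.log (1 / β)) :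
    μ {ω | popQuantile D (2 * γ) < empQuantile (fun i => X i ω) γ}
      ≤ ENNReal.ofReal β := by
  obtain ⟨hγ0, hγ1⟩ := hγ
  obtain ⟨hβ0, hβ1⟩ := hβ
  set q := popQuantile D (2 * γ)
  have hq : 2 * γ ≤ D.real (Set.Iic q) := le_distCdf_popQuantile D (by linarith)
  have hlog : 2 * γ ^ 2 * n ≥ -log β := by
    rw [one_div β, log_inv, ge_iff_le, one_div, inv_mul_le_iff₀ (by positivity)] at hn
    exact hn
  have hn_pos : 0 < (n : ℝ) := by nlinarith [log_neg hβ0 hβ1]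
  have hsub : {ω | q < empQuantile (fun i => X i ω) γ}
      ⊆ {ω | γ * n ≤ n * D.real (Set.Iic q) - #{i | X i ω ∈ Set.Iic q}} := by
    intro ω hω
    have hfew : (#{i | X i ω ≤ q} : ℝ) < γ * n :=
      lt_of_not_ge fun h => hω.not_ge (empQuantile_le_of_le_card _ (by positivity) h)
    simp only [Set.mem_ofPred_eq, Set.mem_Iic]
    linarith [mul_le_mul_of_nonneg_left hq n.cast_nonneg]
  rw [ENNReal.le_ofReal_iff_toReal_le (measure_ne_top _ _) hβ0.le, ← measureReal_def]
  calc μ.real {ω | q < empQuantile (fun i => X i ω) γ}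
      ≤ μ.real {ω | γ * n ≤ n * D.real (Set.Iic q) - #{i | X i ω ∈ Set.Iic q}} :=
        measureReal_mono hsub
    _ ≤ exp (-2 * (γ * n) ^ 2 / n) :=
        measureReal_le_sub_card_le hmeas hindep hid measurableSet_Iic (by positivity)
    _ = exp (-(2 * γ ^ 2 * n)) := by congr 1; field_simp
    _ ≤ exp (log β) := exp_le_exp.2 (by linarith)
    _ = β := exp_log hβ0
end

section
/- Let X₁, …, Xₙ be i.i.d. real-valued random variables with common distribution D having CDF F, let α ∈ (0,1), β ∈ (0,1), and t > 0 be such that F(q_α + t) > α, where q_α := inf{x : F(x) ≥ α}. Define the empirical quantile q̂_α := inf{x : #{i : Xᵢ ≤ x} ≥ α·n}. If n ≥ (1/(2·(F(q_α + t) − α)²))·log(1/β), then Pr( q̂_α > q_α + t ) ≤ β. -/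
open MeasureTheory ProbabilityTheory

/-!
If `q̂_α > q := q_α + t`, fewer than `α n` samples lie in `(-∞, q]`. That count is a sum of `n`
independent Bernoulli variables of mean `p := F(q)`, so by Hoeffding's inequality it drops to
`n (p - ε)` with `ε := p - α > 0` with probability at most `exp (-2 n ε²)`, which is `≤ β` by the
choice of `n`.
-/

open Real Finset

-- For `n = 0` the defining set is all of `ℝ`, whose `sInf` is the junk value `0`.
theorem empQuantile_le {n : ℕ} (X : Fin n → ℝ) {γ x : ℝ} (hγ : 0 < γ) (hn : 0 < n)
    (hx : γ * n ≤ #{i | X i ≤ x}) : empQuantile X γ ≤ x := by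
  refine csInf_le ?_ hx
  obtain ⟨b, hb⟩ := (Set.finite_range X).bddBelow
  refine ⟨b, fun y hy => ?_⟩
  have hpos : 0 < #{i | X i ≤ y} := by
    exact_mod_cast (by positivity : (0 : ℝ) < γ * n).trans_le hy
  obtain ⟨i, hi⟩ := Finset.card_pos.mp hpos
  exact (hb (Set.mem_range_self i)).trans (Finset.mem_filter.mp hi).2

section Hoeffding

variable {Ω E : Type*} [MeasurableSpace Ω] [MeasurableSpace E] {μ : Measure Ω}
  [IsProbabilityMeasure μ]

theorem hasSubgaussianMGF_measureReal_sub_indicator {Y : Ω → E} (hY : Measurable Y) {s : Set E}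
    (hs : MeasurableSet s) :
    HasSubgaussianMGF (fun ω => (μ.map Y).real s - s.indicator 1 (Y ω)) 4⁻¹ μ := by
  have hmean : μ[fun ω => s.indicator (1 : E → ℝ) (Y ω)] = (μ.map Y).real s := by
    rw [← integral_indicator_one hs, integral_map hY.aemeasurable]
    exact (measurable_const.indicator hs).aestronglyMeasurable
  have h := (hasSubgaussianMGF_of_mem_Icc (μ := μ)
    (X := fun ω => s.indicator (1 : E → ℝ) (Y ω)) (a := 0) (b := 1)
    ((measurable_const.indicator hs).comp hY).aemeasurable
    (ae_of_all _ fun ω => ?_)).neg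
  · convert h using 1
    · ext ω; simp [hmean]
    · norm_num
  · by_cases h : Y ω ∈ s <;> simp [h]

theorem measureReal_card_le_le_exp {ι : Type*} [Fintype ι] {X : ι → Ω → E}
    (hmeas : ∀ i, Measurable (X i)) (hindep : iIndepFun X μ) {D : Measure E}
    (hid : ∀ i, μ.map (X i) = D) {s : Set E} [DecidablePred (· ∈ s)] (hs : MeasurableSet s)
    {ε : ℝ} (hε : 0 ≤ ε) :
    μ.real {ω | (#{i | X i ω ∈ s} : ℝ) ≤ Fintype.card ι * (D.real s - ε)}
      ≤ exp (-2 * Fintype.card ι * ε ^ 2) := by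
  set Z : ι → Ω → ℝ := fun i ω => D.real s - s.indicator 1 (X i ω)
  have hZ : ∀ i ∈ (univ : Finset ι), HasSubgaussianMGF (Z i) 4⁻¹ μ := fun i _ => by
    simpa only [Z, ← hid i] using hasSubgaussianMGF_measureReal_sub_indicator (hmeas i) hs
  have hZindep : iIndepFun Z μ :=
    hindep.comp (fun _ x => D.real s - s.indicator 1 x)
      (fun _ => measurable_const.sub (measurable_const.indicator hs))
  have hsum : ∀ ω, ∑ i, Z i ω = Fintype.card ι * D.real s - #{i | X i ω ∈ s} := by
    intro ω
    simp [Z, Finset.sum_sub_distrib, Set.indicator_apply, Finset.sum_boole]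
  have h := HasSubgaussianMGF.measure_sum_ge_le_of_iIndepFun hZindep hZ
    (ε := Fintype.card ι * ε) (by positivity)
  have hset : {ω | (#{i | X i ω ∈ s} : ℝ) ≤ Fintype.card ι * (D.real s - ε)}
      = {ω | Fintype.card ι * ε ≤ ∑ i, Z i ω} := by
    ext ω
    simp only [Set.mem_ofPred_eq, hsum]
    constructor <;> intro h <;> linarith
  rw [hset]
  refine h.trans_eq (congrArg exp ?_)
  rcases (Fintype.card ι).eq_zero_or_pos with hn | hn
  · simp [hn]
  · simp only [Finset.sum_const, Finset.card_univ, nsmul_eq_mul]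
    push_cast
    field_simp
    ring

end Hoeffding

theorem empirical_quantile_upper_additive_general
    {Ω : Type*} [MeasurableSpace Ω] (μ : Measure Ω) [IsProbabilityMeasure μ]
    (n : ℕ) (X : Fin n → Ω → ℝ) (hmeas : ∀ i, Measurable (X i))
    (D : Measure ℝ)
    (hindep : iIndepFun X μ)
    (hid : ∀ i, Measure.map (X i) μ = D)
    (α β t : ℝ) (hα : α ∈ Set.Ioo (0 : ℝ) 1) (hβ : β ∈ Set.Ioo (0 : ℝ) 1)
    (hF : α < distCdf D (popQuantile D α + t))
    (hn : (n : ℝ) ≥ (1 / (2 * (distCdf D (popQuantile D α + t) - α) ^ 2))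
            * Real.log (1 / β)) :
    μ {ω | popQuantile D α + t < empQuantile (fun i => X i ω) α}
      ≤ ENNReal.ofReal β := by
  set q := popQuantile D α + t
  rw [show distCdf D q = D.real (Set.Iic q) from rfl] at hF hn
  set ε := D.real (Set.Iic q) - α
  have hε : 0 < ε := sub_pos.mpr hF
  have hlog : 0 < log (1 / β) := log_pos ((one_lt_div hβ.1).mpr hβ.2)
  have hnε : log (1 / β) ≤ 2 * n * ε ^ 2 := by
    rw [ge_iff_le, one_div_mul_eq_div, div_le_iff₀ (by positivity)] at hn
    linarith
  have hn0 : 0 < n := by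
    by_contra! h
    simp only [Nat.le_zero.mp h, CharP.cast_eq_zero] at hnε
    linarith
  have hsub : {ω | q < empQuantile (fun i => X i ω) α}
      ⊆ {ω | (#{i | X i ω ∈ Set.Iic q} : ℝ) ≤ n * (D.real (Set.Iic q) - ε)} := by
    intro ω hω
    by_contra hcount
    simp only [Set.mem_ofPred_eq, ε, sub_sub_cancel, not_le] at hω hcount
    exact hω.not_ge (empQuantile_le _ hα.1 hn0 (by rw [mul_comm]; exact hcount.le))
  have hexp : exp (-2 * n * ε ^ 2) ≤ β := by
    calc exp (-2 * n * ε ^ 2) ≤ exp (log β) := by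
          rw [one_div, log_inv] at hnε
          exact exp_le_exp.mpr (by linarith)
      _ = β := exp_log hβ.1
  calc μ {ω | q < empQuantile (fun i => X i ω) α}
      ≤ ENNReal.ofReal (μ.real _) := (measure_mono hsub).trans_eq (ofReal_measureReal).symm
    _ ≤ ENNReal.ofReal β := by
      gcongr
      have hHoeffding :=
        measureReal_card_le_le_exp hmeas hindep hid (measurableSet_Iic (a := q)) hε.le
      rw [Fintype.card_fin] at hHoeffding
      exact hHoeffding.trans hexp

/-- For i.i.d. samples from `D` with CDF `F`, if `F(q_α + t) > α`
and `n ≥ (1/(2(F(q_α+t) − α)²))·log(1/β)`, then the empirical `α`-quantile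
exceeds `q_α + t` with probability at most `β`. -/
theorem empirical_quantile_upper_additive
    {Ω : Type*} [MeasurableSpace Ω] (μ : Measure Ω) [IsProbabilityMeasure μ]
    (n : ℕ) (X : Fin n → Ω → ℝ) (hmeas : ∀ i, Measurable (X i))
    (D : Measure ℝ) [IsProbabilityMeasure D]
    (hindep : iIndepFun X μ)
    (hid : ∀ i, Measure.map (X i) μ = D)
    (α β t : ℝ) (hα : α ∈ Set.Ioo (0 : ℝ) 1) (hβ : β ∈ Set.Ioo (0 : ℝ) 1)
    (ht : 0 < t) (hF : α < distCdf D (popQuantile D α + t))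
    (hn : (n : ℝ) ≥ (1 / (2 * (distCdf D (popQuantile D α + t) - α) ^ 2))
            * Real.log (1 / β)) :
    μ {ω | popQuantile D α + t < empQuantile (fun i => X i ω) α}
      ≤ ENNReal.ofReal β :=
  empirical_quantile_upper_additive_general μ n X hmeas D hindep hid α β t hα hβ hF hn
end

section
/- Let X₁, …, Xₙ be i.i.d. real-valued random variables with common distribution D having CDF F, let α ∈ (0,1), β ∈ (0,1), and t > 0 be such that α − F(q_α − t) > 0, where q_α := inf{x : F(x) ≥ α}. Define the empirical quantile q̂_α := inf{x : #{i : Xᵢ ≤ x} ≥ α·n}. If n ≥ (1/(2·(α − F(q_α − t))²))·log(1/β), then Pr( q̂_α < q_α − t ) ≤ β. -/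
/-! If `q̂_α < s := q_α - t`, then at least `α n` of the samples lie in `(-∞, s]`. That count is a
sum of `n` independent indicators with mean `F(s)`; each centred indicator takes values in an
interval of length one, so by Hoeffding's lemma it is sub-Gaussian with parameter `1/4`, and
Hoeffding's inequality bounds the probability that the count exceeds `n F(s)` by
`n (α - F(s))` by `exp (-2 n (α - F(s))²)`, which is at most `β` by the choice of `n`. -/

open MeasureTheory ProbabilityTheory

open Finset

lemma monotone_card_filter_le {ι : Type*} [Fintype ι] (x : ι → ℝ) :
    Monotone fun y ↦ #{i | x i ≤ y} := fun _ _ hyz ↦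
  card_le_card fun i ↦ by
    simp only [mem_filter, mem_univ, true_and]
    exact fun hy ↦ hy.trans hyz

lemma le_card_filter_le_of_empQuantile_lt {n : ℕ} (hn : 0 < n) (x : Fin n → ℝ) {γ s : ℝ}
    (hγ : 0 < γ) (hγ1 : γ ≤ 1) (h : empQuantile x γ < s) : γ * n ≤ #{i | x i ≤ s} := by
  have hne : (univ : Finset (Fin n)).Nonempty := univ_nonempty_iff.mpr ⟨⟨0, hn⟩⟩
  have hbdd : BddBelow {y : ℝ | γ * n ≤ #{i | x i ≤ y}} := by
    refine ⟨univ.inf' hne x, fun y hy ↦ ?_⟩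
    obtain ⟨i, hi⟩ : (filter (fun i ↦ x i ≤ y) univ).Nonempty := by
      rw [nonempty_iff_ne_empty]
      intro h0
      simp only [Set.mem_ofPred_eq, h0, card_empty, Nat.cast_zero] at hy
      have : (0 : ℝ) < γ * n := by positivity
      linarith
    exact (inf'_le x (mem_univ i)).trans (mem_filter.mp hi).2
  have hnonempty : {y : ℝ | γ * n ≤ #{i | x i ≤ y}}.Nonempty := by
    refine ⟨univ.sup' hne x, ?_⟩
    rw [Set.mem_ofPred_eq, filter_true_of_mem fun i _ ↦ le_sup' x (mem_univ i), card_univ,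
      Fintype.card_fin]
    nlinarith
  obtain ⟨y, hy, hys⟩ := (csInf_lt_iff hbdd hnonempty).mp h
  exact hy.trans (by exact_mod_cast monotone_card_filter_le x hys.le)

section Hoeffding
variable {Ω : Type*} [MeasurableSpace Ω] {μ : Measure Ω} [IsProbabilityMeasure μ]

lemma hasSubgaussianMGF_indicator_comp_sub {E : Type*} [MeasurableSpace E] {Y : Ω → E}
    (hY : Measurable Y) {S : Set E} (hS : MeasurableSet S) :
    HasSubgaussianMGF (fun ω ↦ S.indicator 1 (Y ω) - μ.real (Y ⁻¹' S)) (1 / 4) μ := by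
  have hmem : ∀ ω, S.indicator (1 : E → ℝ) (Y ω) ∈ Set.Icc (0 : ℝ) 1 := fun ω ↦ by
    by_cases h : Y ω ∈ S <;> simp [h]
  have hmean : μ[fun ω ↦ S.indicator (1 : E → ℝ) (Y ω)] = μ.real (Y ⁻¹' S) := by
    rw [← integral_indicator_one (hY hS)]
    rfl
  have h := hasSubgaussianMGF_of_mem_Icc (X := fun ω ↦ S.indicator (1 : E → ℝ) (Y ω))
    ((measurable_one.indicator hS).comp hY).aemeasurable (ae_of_all μ hmem)
  rw [hmean] at h
  convert h using 1
  ext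
  norm_num

open Classical in
lemma measureReal_le_card_filter_mem_le {ι : Type*} [Fintype ι] {E : Type*} [MeasurableSpace E]
    {X : ι → Ω → E} (hindep : iIndepFun X μ)
    (hX : ∀ i, Measurable (X i)) {S : Set E} (hS : MeasurableSet S) {q ε : ℝ}
    (hq : ∀ i, μ.real (X i ⁻¹' S) = q) (hε : 0 ≤ ε) :
    μ.real {ω | (q + ε) * Fintype.card ι ≤ #{i | X i ω ∈ S}}
      ≤ Real.exp (-2 * Fintype.card ι * ε ^ 2) := by
  have hsubG : ∀ i ∈ (univ : Finset ι),
      HasSubgaussianMGF (fun ω ↦ S.indicator 1 (X i ω) - q) (1 / 4) μ := fun i _ ↦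
    hq i ▸ hasSubgaussianMGF_indicator_comp_sub (hX i) hS
  have hZ : iIndepFun (fun i ω ↦ S.indicator 1 (X i ω) - q) μ :=
    hindep.comp (fun _ y ↦ S.indicator 1 y - q) fun _ ↦ (measurable_one.indicator hS).sub_const q
  have hcount : ∀ ω, ((#{i | X i ω ∈ S} : ℕ) : ℝ) = ∑ i, S.indicator 1 (X i ω) := fun ω ↦ by
    simp only [Set.indicator_apply, Pi.one_apply, sum_boole]
  have h := HasSubgaussianMGF.measure_sum_ge_le_of_iIndepFun hZ hsubG
    (mul_nonneg hε (Fintype.card ι).cast_nonneg)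
  calc μ.real {ω | (q + ε) * Fintype.card ι ≤ #{i | X i ω ∈ S}}
      = μ.real {ω | ε * Fintype.card ι ≤ ∑ i, (S.indicator 1 (X i ω) - q)} := by
        congr 1; ext ω
        simp only [hcount, Set.mem_ofPred_eq, sum_sub_distrib, sum_const, card_univ, nsmul_eq_mul]
        constructor <;> intro h <;> linarith
    _ ≤ _ := h
    _ = Real.exp (-2 * Fintype.card ι * ε ^ 2) := by
        rcases (Fintype.card ι).eq_zero_or_pos with h0 | hn
        · simp [h0]
        · congr 1
          simp only [one_div, sum_const, card_univ, nsmul_eq_mul, NNReal.coe_mul,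
            NNReal.coe_natCast, NNReal.coe_inv, NNReal.coe_ofNat]
          field_simp
          ring

end Hoeffding

theorem empirical_quantile_lower_additive_general
    {Ω : Type*} [MeasurableSpace Ω] (μ : Measure Ω) [IsProbabilityMeasure μ]
    (n : ℕ) (X : Fin n → Ω → ℝ) (hmeas : ∀ i, Measurable (X i))
    (D : Measure ℝ) [IsProbabilityMeasure D]
    (hindep : iIndepFun X μ)
    (hid : ∀ i, Measure.map (X i) μ = D)
    (α β t : ℝ) (hα : α ∈ Set.Ioo (0 : ℝ) 1) (hβ : β ∈ Set.Ioo (0 : ℝ) 1)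
    (hF : 0 < α - distCdf D (popQuantile D α - t))
    (hn : (n : ℝ) ≥ (1 / (2 * (α - distCdf D (popQuantile D α - t)) ^ 2))
            * Real.log (1 / β)) :
    μ {ω | empQuantile (fun i => X i ω) α < popQuantile D α - t}
      ≤ ENNReal.ofReal β := by
  set s := popQuantile D α - t
  set p := α - distCdf D s
  have hq : ∀ i, μ.real (X i ⁻¹' Set.Iic s) = distCdf D s := fun i ↦ by
    rw [← map_measureReal_apply (hmeas i) measurableSet_Iic, hid i]
    rfl
  have hc : 0 < 2 * p ^ 2 := mul_pos two_pos (pow_pos hF 2)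
  have hlog : 0 < Real.log (1 / β) := by
    rw [one_div, Real.log_inv]
    exact neg_pos.mpr (Real.log_neg hβ.1 hβ.2)
  have hn_pos : 0 < n := by exact_mod_cast hn.trans_lt' (mul_pos (one_div_pos.mpr hc) hlog)
  have hexp : Real.exp (-2 * n * p ^ 2) ≤ β := by
    rw [ge_iff_le, one_div_mul_eq_div, div_le_iff₀ hc, one_div, Real.log_inv] at hn
    rw [← Real.le_log_iff_exp_le hβ.1]
    linarith
  have hevent : {ω | empQuantile (fun i => X i ω) α < s}
      ⊆ {ω | (distCdf D s + p) * Fintype.card (Fin n) ≤ #{i | X i ω ∈ Set.Iic s}} := by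
    intro ω hω
    simpa [p] using le_card_filter_le_of_empQuantile_lt hn_pos _ hα.1 hα.2.le hω
  calc μ {ω | empQuantile (fun i => X i ω) α < s}
      ≤ ENNReal.ofReal (μ.real
          {ω | (distCdf D s + p) * Fintype.card (Fin n) ≤ #{i | X i ω ∈ Set.Iic s}}) := by
        rw [ofReal_measureReal]
        exact measure_mono hevent
    _ ≤ ENNReal.ofReal β := by
        gcongr
        simpa using (measureReal_le_card_filter_mem_le hindep hmeas measurableSet_Iic hq
          hF.le).trans (by simpa using hexp)

/-- For i.i.d. samples from `D` with CDF `F`, if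
`α − F(q_α − t) > 0` and `n ≥ (1/(2(α − F(q_α−t))²))·log(1/β)`, then the
empirical `α`-quantile falls below `q_α − t` with probability at most `β`. -/
theorem empirical_quantile_lower_additive
    {Ω : Type*} [MeasurableSpace Ω] (μ : Measure Ω) [IsProbabilityMeasure μ]
    (n : ℕ) (X : Fin n → Ω → ℝ) (hmeas : ∀ i, Measurable (X i))
    (D : Measure ℝ) [IsProbabilityMeasure D]
    (hindep : iIndepFun X μ)
    (hid : ∀ i, Measure.map (X i) μ = D)
    (α β t : ℝ) (hα : α ∈ Set.Ioo (0 : ℝ) 1) (hβ : β ∈ Set.Ioo (0 : ℝ) 1)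
    (ht : 0 < t) (hF : 0 < α - distCdf D (popQuantile D α - t))
    (hn : (n : ℝ) ≥ (1 / (2 * (α - distCdf D (popQuantile D α - t)) ^ 2))
            * Real.log (1 / β)) :
    μ {ω | empQuantile (fun i => X i ω) α < popQuantile D α - t}
      ≤ ENNReal.ofReal β :=
  empirical_quantile_lower_additive_general μ n X hmeas D hindep hid α β t hα hβ hF hn
end

section
/- Let X₁, …, Xₙ be i.i.d. real-valued random variables with common distribution D having CDF F, let α ∈ (0,1), Δ > 0 with α − Δ > 0, and β ∈ (0,1). Define the population quantile q_τ := inf{x : F(x) ≥ τ} and the empirical quantile q̂_α := inf{x : #{i : Xᵢ ≤ x} ≥ α·n}. If n ≥ (1/(2Δ²))·log(1/β), then Pr( q̂_α < q_{α−Δ} ) ≤ β. -/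
open MeasureTheory ProbabilityTheory

/-!
If `q̂_α < q := q_{α-Δ}`, then at least `αn` samples lie strictly below `q`. Each sample does so
with probability `D(-∞, q)`, which is the left limit of the CDF at `q` and hence at most `α - Δ`.
Hoeffding's inequality for the indicators of `{Xᵢ < q}` bounds the probability of this excess
by `exp (-2nΔ²)`, which is at most `β` by the choice of `n`.
-/

open Set Filter Real
open scoped Finset

lemma measureReal_Iio_popQuantile_le (D : Measure ℝ) [IsProbabilityMeasure D] {τ : ℝ}
    (hτ : 0 < τ) : D.real (Iio (popQuantile D τ)) ≤ τ := by
  have hcdf : ∀ x, distCdf D x = cdf D x := fun x => (cdf_eq_real D x).symm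
  obtain ⟨x₀, hx₀⟩ := eventually_atBot.mp ((tendsto_cdf_atBot (μ := D)).eventually_lt_const hτ)
  have hbdd : BddBelow {x | τ ≤ distCdf D x} := ⟨x₀, fun x hx => by
    by_contra! hlt
    exact (hx₀ x hlt.le).not_ge (hcdf x ▸ hx)⟩
  have hbelow : ∀ x < popQuantile D τ, cdf D x ≤ τ := fun x hx => by
    rw [← hcdf]
    exact (not_le.mp fun h => hx.not_ge (csInf_le hbdd h)).le
  have hleftLim : Function.leftLim (cdf D) (popQuantile D τ) ≤ τ :=
    le_of_tendsto ((cdf D).mono.tendsto_leftLim _) (eventually_nhdsWithin_of_forall hbelow)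
  have hIio := (cdf D).measure_Iio (tendsto_cdf_atBot D) (popQuantile D τ)
  rw [measure_cdf, sub_zero] at hIio
  rw [measureReal_def, hIio]
  exact ENNReal.toReal_le_of_le_ofReal hτ.le (ENNReal.ofReal_le_ofReal hleftLim)

lemma le_card_filter_lt_of_empQuantile_lt {n : ℕ} (v : Fin n → ℝ) {γ q : ℝ} (hγ0 : 0 < γ)
    (hγ1 : γ ≤ 1) (h : empQuantile v γ < q) :
    γ * n ≤ #{i | v i < q} := by
  rcases Nat.eq_zero_or_pos n with rfl | hn
  · simp
  have : Nonempty (Fin n) := ⟨⟨0, hn⟩⟩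
  obtain ⟨M, hM⟩ := Finite.exists_le v
  obtain ⟨m, hm⟩ := Finite.exists_ge v
  have hne : {x : ℝ | γ * n ≤ #{i | v i ≤ x}}.Nonempty := ⟨M, by
    simpa [hM] using mul_le_of_le_one_left (Nat.cast_nonneg n) hγ1⟩
  have hbdd : BddBelow {x : ℝ | γ * n ≤ #{i | v i ≤ x}} := ⟨m, fun x hx => by
    have hpos : 0 < #{i | v i ≤ x} := by
      exact_mod_cast (by positivity : (0 : ℝ) < γ * n).trans_le hx
    obtain ⟨i, hi⟩ := Finset.card_pos.mp hpos
    exact (hm i).trans (Finset.mem_filter.mp hi).2⟩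
  obtain ⟨y, hy, hyq⟩ := (csInf_lt_iff hbdd hne).mp h
  refine hy.trans ?_
  exact_mod_cast Finset.card_le_card
    (Finset.monotone_filter_right _ fun _ _ (hi : _ ≤ y) => hi.trans_lt hyq)

lemma measureReal_sum_ge_le_of_iIndepFun_of_mem_Icc {Ω ι : Type*} [MeasurableSpace Ω]
    {μ : Measure Ω} [Fintype ι] {Y : ι → Ω → ℝ} (hindep : iIndepFun Y μ)
    (hmeas : ∀ i, AEMeasurable (Y i) μ)
    (hY : ∀ i, ∀ᵐ ω ∂μ, Y i ω ∈ Icc 0 1) {p t : ℝ} (hmean : ∀ i, μ[Y i] ≤ p) (ht : 0 ≤ t) :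
    μ.real {ω | (p + t) * Fintype.card ι ≤ ∑ i, Y i ω} ≤ exp (-2 * Fintype.card ι * t ^ 2) := by
  have : IsProbabilityMeasure μ := hindep.isProbabilityMeasure
  have hcentered : iIndepFun (fun i => (· - μ[Y i]) ∘ Y i) μ :=
    hindep.comp (fun i x => x - μ[Y i]) fun _ => measurable_id.sub_const _
  have hoeffding := HasSubgaussianMGF.measure_sum_ge_le_of_iIndepFun hcentered
    (fun i _ => hasSubgaussianMGF_of_mem_Icc (hmeas i) (hY i)) (s := Finset.univ)
    (ε := t * Fintype.card ι) (by positivity)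
  have hsub : {ω | (p + t) * Fintype.card ι ≤ ∑ i, Y i ω}
      ⊆ {ω | t * Fintype.card ι ≤ ∑ i, (Y i ω - μ[Y i])} := fun ω hω => by
    have : ∑ i, μ[Y i] ≤ p * Fintype.card ι := by
      simpa [mul_comm] using Finset.sum_le_sum fun i (_ : i ∈ Finset.univ) => hmean i
    simp only [mem_ofPred_eq, Finset.sum_sub_distrib] at hω ⊢
    linarith
  refine (measureReal_mono hsub).trans (hoeffding.trans_eq ?_)
  congr 1
  rcases eq_or_ne (Fintype.card ι : ℝ) 0 with h | h
  · simp [h]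
  · simp only [sub_zero, nnnorm_one, one_div, inv_pow, Finset.sum_const, Finset.card_univ,
      nsmul_eq_mul, NNReal.coe_mul, NNReal.coe_natCast, NNReal.coe_inv, NNReal.coe_pow,
      NNReal.coe_ofNat, neg_mul]
    field_simp

/-- For i.i.d. samples from `D`, if `n ≥ (1/(2Δ²))·log(1/β)` then
the empirical `α`-quantile falls below the population `(α−Δ)`-quantile with
probability at most `β`. -/
theorem empirical_quantile_lower_shift
    {Ω : Type*} [MeasurableSpace Ω] (μ : Measure Ω) [IsProbabilityMeasure μ]
    (n : ℕ) (X : Fin n → Ω → ℝ) (hmeas : ∀ i, Measurable (X i))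
    (D : Measure ℝ) [IsProbabilityMeasure D]
    (hindep : iIndepFun X μ)
    (hid : ∀ i, Measure.map (X i) μ = D)
    (α Δ β : ℝ) (hα : α ∈ Set.Ioo (0 : ℝ) 1) (hΔ : 0 < Δ) (hαΔ : 0 < α - Δ)
    (hβ : β ∈ Set.Ioo (0 : ℝ) 1)
    (hn : (n : ℝ) ≥ (1 / (2 * Δ ^ 2)) * Real.log (1 / β)) :
    μ {ω | empQuantile (fun i => X i ω) α < popQuantile D (α - Δ)}
      ≤ ENNReal.ofReal β := by
  set q := popQuantile D (α - Δ)
  set Y : Fin n → Ω → ℝ := fun i ω => (Iio q).indicator 1 (X i ω)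
  have hmean : ∀ i, μ[Y i] ≤ α - Δ := fun i => by
    rw [← integral_map (hmeas i).aemeasurable
      (aestronglyMeasurable_one.indicator measurableSet_Iio), hid i,
      integral_indicator_one measurableSet_Iio]
    exact measureReal_Iio_popQuantile_le D hαΔ
  have hsub : {ω | empQuantile (fun i => X i ω) α < q} ⊆ {ω | α * n ≤ ∑ i, Y i ω} :=
    fun ω hω => by
      simpa [Y, indicator_apply, Finset.sum_boole] using
        le_card_filter_lt_of_empQuantile_lt _ hα.1 hα.2.le hω
  have hoeffding : μ.real {ω | α * n ≤ ∑ i, Y i ω} ≤ exp (-2 * n * Δ ^ 2) := by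
    simpa using measureReal_sum_ge_le_of_iIndepFun_of_mem_Icc
      (hindep.comp _ fun _ => measurable_one.indicator measurableSet_Iio)
      (fun i => ((measurable_one.indicator measurableSet_Iio).comp (hmeas i)).aemeasurable)
      (fun i => ae_of_all _ fun ω => ⟨indicator_nonneg (fun _ _ => zero_le_one) _,
        indicator_le_self' (fun _ _ => zero_le_one) _⟩) hmean hΔ.le
  have hsample : exp (-2 * n * Δ ^ 2) ≤ β := by
    have hlog : log (1 / β) ≤ 2 * Δ ^ 2 * n := by
      rwa [ge_iff_le, one_div_mul_eq_div, div_le_iff₀' (by positivity)] at hn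
    rw [one_div, log_inv] at hlog
    calc exp (-2 * n * Δ ^ 2) ≤ exp (log β) := exp_le_exp.mpr (by linarith)
      _ = β := exp_log hβ.1
  calc μ {ω | empQuantile (fun i => X i ω) α < q}
      ≤ μ {ω | α * n ≤ ∑ i, Y i ω} := measure_mono hsub
    _ = ENNReal.ofReal (μ.real {ω | α * n ≤ ∑ i, Y i ω}) := (ofReal_measureReal).symm
    _ ≤ ENNReal.ofReal β := ENNReal.ofReal_le_ofReal (hoeffding.trans hsample)
end
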